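/- Let Λ(·) = Σ_α U_{π_α}ᵀ D_α (·) D_α* U_{π_α} be a quantum channel on d×d matrices, where each π_α is a permutation of {1,…,d}, U_{π_α} = Σ_i |π_α(i)⟩⟨i|, and D_α = Σ_i d_α(i)|i⟩⟨i| are diagonal matrices. Then for every density matrix ρ, η(Λ(ρ)) ≤ η(ρ). -/

import Mathlib

/-!
Each Kraus term maps the entry `(i, j)` of `Λ(ρ)` to the entry `(π i, π j)` of `ρ` with `π i ≠ π j`,
so `|ρ_{π i, π j}| ≤ η(ρ) √(ρ_{π i π i} ρ_{π j π j})`. Summing over the Kraus terms and applying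
Cauchy–Schwarz gives `|Λ(ρ)_{ij}| ≤ η(ρ) √(Λ(ρ)_{ii} Λ(ρ)_{jj})`, i.e. `η(Λ(ρ)) ≤ η(ρ)`.
-/

open scoped ComplexOrder

noncomputable def eta {n : Type*} [Fintype n] (A : Matrix n n ℂ) : ℝ :=
  sSup {x : ℝ | ∃ i j : n, i ≠ j ∧ A i i ≠ 0 ∧ A j j ≠ 0 ∧
    x = ‖A i j‖ / Real.sqrt ((A i i).re * (A j j).re)}

namespace Matrix.PosSemidef

variable {n : Type*} {A : Matrix n n ℂ}

lemma re_apply_self_nonneg (hA : A.PosSemidef) (i : n) : 0 ≤ (A i i).re :=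
  (Complex.nonneg_iff.1 hA.diag_nonneg).1

lemma norm_apply_sq_le (hA : A.PosSemidef) (i j : n) :
    ‖A i j‖ ^ 2 ≤ (A i i).re * (A j j).re := by
  -- the principal `2 × 2` submatrix on `i, j` has nonnegative determinant
  have hdet := (Complex.nonneg_iff.1 (hA.submatrix ![i, j]).det_nonneg).1
  have hji : A j i = starRingEnd ℂ (A i j) := (hA.1.apply j i).symm
  have hii : (A i i).im = 0 := by rw [← hA.1.coe_re_apply_self i]; rfl
  rw [Matrix.det_fin_two] at hdet
  simp only [submatrix_apply, Matrix.cons_val_zero, Matrix.cons_val_one, hji,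
    Complex.mul_conj, Complex.sub_re, Complex.mul_re, hii, Complex.ofReal_re] at hdet
  rw [← Complex.normSq_eq_norm_sq]
  linarith

lemma norm_apply_le_sqrt (hA : A.PosSemidef) (i j : n) :
    ‖A i j‖ ≤ √((A i i).re * (A j j).re) :=
  Real.le_sqrt_of_sq_le (hA.norm_apply_sq_le i j)

end Matrix.PosSemidef

section eta

variable {n : Type*} [Fintype n] {A : Matrix n n ℂ}

lemma eta_nonneg (A : Matrix n n ℂ) : 0 ≤ eta A :=
  Real.sSup_nonneg <| by rintro x ⟨i, j, -, -, -, rfl⟩; positivity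

lemma eta_le_of_norm_le {t : ℝ} (ht : 0 ≤ t)
    (h : ∀ i j, i ≠ j → ‖A i j‖ ≤ t * √((A i i).re * (A j j).re)) : eta A ≤ t :=
  Real.sSup_le (by
    rintro x ⟨i, j, hij, -, -, rfl⟩
    -- a vanishing denominator is harmless: then the quotient is `0 ≤ t`
    exact div_le_of_le_mul₀ (Real.sqrt_nonneg _) ht (h i j hij)) ht

lemma Matrix.PosSemidef.norm_apply_le_eta_mul (hA : A.PosSemidef) {i j : n} (hij : i ≠ j) :
    ‖A i j‖ ≤ eta A * √((A i i).re * (A j j).re) := by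
  rcases (Real.sqrt_nonneg ((A i i).re * (A j j).re)).eq_or_lt with h0 | hpos
  · simpa [← h0] using hA.norm_apply_le_sqrt i j
  have hprod := Real.sqrt_pos.1 hpos
  have hne : ∀ k, (A k k).re ≠ 0 → A k k ≠ 0 := fun k hk h ↦ hk (by simp [h])
  have hbdd : BddAbove {x : ℝ | ∃ i j : n, i ≠ j ∧ A i i ≠ 0 ∧ A j j ≠ 0 ∧
      x = ‖A i j‖ / √((A i i).re * (A j j).re)} :=
    ((Set.finite_range fun p : n × n ↦ ‖A p.1 p.2‖ / √((A p.1 p.1).re * (A p.2 p.2).re)).subset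
      (by rintro x ⟨i, j, -, -, -, rfl⟩; exact ⟨(i, j), rfl⟩)).bddAbove
  rw [← div_le_iff₀ hpos]
  exact le_csSup hbdd ⟨i, j, hij, hne i (left_ne_zero_of_mul hprod.ne'),
    hne j (right_ne_zero_of_mul hprod.ne'), rfl⟩

end eta

lemma norm_sum_mul_conj_mul_le {ι : Type*} (s : Finset ι) {x y z : ι → ℂ} {p q : ι → ℝ} {t : ℝ}
    (hp : ∀ a, 0 ≤ p a) (hq : ∀ a, 0 ≤ q a) (ht : 0 ≤ t)
    (hz : ∀ a ∈ s, ‖z a‖ ≤ t * √(p a * q a)) :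
    ‖∑ a ∈ s, x a * starRingEnd ℂ (y a) * z a‖ ≤
      t * √((∑ a ∈ s, ‖x a‖ ^ 2 * p a) * ∑ a ∈ s, ‖y a‖ ^ 2 * q a) := by
  have hsqrt : ∀ (w : ℂ) (r : ℝ), √(‖w‖ ^ 2 * r) = ‖w‖ * √r := fun w r ↦ by
    rw [Real.sqrt_mul (by positivity), Real.sqrt_sq (norm_nonneg w)]
  calc ‖∑ a ∈ s, x a * starRingEnd ℂ (y a) * z a‖
      ≤ ∑ a ∈ s, ‖x a‖ * ‖y a‖ * ‖z a‖ := by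
        refine (norm_sum_le _ _).trans_eq (Finset.sum_congr rfl fun a _ ↦ ?_)
        rw [norm_mul, norm_mul, Complex.norm_conj]
    _ ≤ ∑ a ∈ s, t * (√(‖x a‖ ^ 2 * p a) * √(‖y a‖ ^ 2 * q a)) := by
        refine Finset.sum_le_sum fun a ha ↦ ?_
        rw [hsqrt, hsqrt]
        calc ‖x a‖ * ‖y a‖ * ‖z a‖ ≤ ‖x a‖ * ‖y a‖ * (t * √(p a * q a)) := by
              gcongr; exact hz a ha
          _ = _ := by rw [Real.sqrt_mul (hp a)]; ring
    _ ≤ t * √((∑ a ∈ s, ‖x a‖ ^ 2 * p a) * ∑ a ∈ s, ‖y a‖ ^ 2 * q a) := by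
        have hxp a : 0 ≤ ‖x a‖ ^ 2 * p a := mul_nonneg (sq_nonneg _) (hp a)
        have hyq a : 0 ≤ ‖y a‖ ^ 2 * q a := mul_nonneg (sq_nonneg _) (hq a)
        rw [← Finset.mul_sum, Real.sqrt_mul (Finset.sum_nonneg fun a _ ↦ hxp a)]
        exact mul_le_mul_of_nonneg_left (Real.sum_sqrt_mul_sqrt_le s hxp hyq) ht

theorem stmt_3_general {d : ℕ} {α : Type*} [Fintype α]
    (π : α → Equiv.Perm (Fin d)) (c : α → Fin d → ℂ)
    (ρ : Matrix (Fin d) (Fin d) ℂ) (hρ : ρ.PosSemidef)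
    (Λρ : Matrix (Fin d) (Fin d) ℂ)
    (hΛ : ∀ i j : Fin d, Λρ i j =
      ∑ a : α, c a (π a i) * (starRingEnd ℂ) (c a (π a j)) * ρ (π a i) (π a j)) :
    eta Λρ ≤ eta ρ := by
  have hdiag : ∀ i, (Λρ i i).re = ∑ a, ‖c a (π a i)‖ ^ 2 * (ρ (π a i) (π a i)).re := fun i ↦ by
    simp only [hΛ, Complex.re_sum, Complex.mul_conj, Complex.re_ofReal_mul,
      Complex.normSq_eq_norm_sq]
  refine eta_le_of_norm_le (eta_nonneg ρ) fun i j hij ↦ ?_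
  rw [hΛ, hdiag, hdiag]
  exact norm_sum_mul_conj_mul_le _ (fun a ↦ hρ.re_apply_self_nonneg _)
    (fun a ↦ hρ.re_apply_self_nonneg _) (eta_nonneg ρ)
    fun a _ ↦ hρ.norm_apply_le_eta_mul ((π a).injective.ne hij)

theorem stmt_3 {d : ℕ} {α : Type*} [Fintype α]
    (π : α → Equiv.Perm (Fin d)) (c : α → Fin d → ℂ)
    (htp : ∀ i : Fin d, ∑ a : α, ‖c a i‖ ^ 2 = 1)
    (ρ : Matrix (Fin d) (Fin d) ℂ) (hρ : ρ.PosSemidef) (htr : ρ.trace = 1)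
    (Λρ : Matrix (Fin d) (Fin d) ℂ)
    (hΛ : ∀ i j : Fin d, Λρ i j =
      ∑ a : α, c a (π a i) * (starRingEnd ℂ) (c a (π a j)) * ρ (π a i) (π a j)) :
    eta Λρ ≤ eta ρ :=
  stmt_3_general π c ρ hρ Λρ hΛ
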